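/- Let X be a compact topological space with a base A of cardinality at most the weight of X, closed under pairwise intersections in the sense that U ∩ V ∈ A ∪ {∅} for all U, V ∈ A. Suppose κ ≤ w(X) and X admits a ⟨w(X), κ⟩-splitter. Then A contains a subfamily which is a base of X and is κ^op-like (no member is contained in κ-many members). -/

import Mathlib

/-!
Enumerate `A` injectively by the indices of the splitter. For each `V ∈ A`, refine the finite
cover `F V` by finitely many members of `A` covering `X` (compactness), and let `B` consist of
the nonempty sets `V ∩ W` with `W` in that refinement. These lie in `A` and form a base. If a
member `O` of `B` lay in `κ`-many members of `B`, then, since each `V` contributes only finitely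
many of them, `O` would lie in a member of `F V` for `κ`-many `V`, and the splitter property would
make the interior of their intersection, which contains `O`, empty.
-/

open Cardinal Set

universe u

variable {X : Type u}

/-- `B` is a base for the topology of `X`. -/
def IsBase [TopologicalSpace X] (B : Set (Set X)) : Prop :=
  (∀ U ∈ B, IsOpen U) ∧ ∀ W : Set X, IsOpen W → ∀ p ∈ W, ∃ U ∈ B, p ∈ U ∧ U ⊆ W

/-- `B` is a local base at `p`. -/
def IsLocalBase [TopologicalSpace X] (p : X) (B : Set (Set X)) : Prop :=
  (∀ U ∈ B, IsOpen U ∧ p ∈ U) ∧ ∀ W : Set X, IsOpen W → p ∈ W → ∃ U ∈ B, U ⊆ W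

/-- `B` is a local π-base at `p`. -/
def IsLocalPiBase [TopologicalSpace X] (p : X) (B : Set (Set X)) : Prop :=
  (∀ U ∈ B, IsOpen U ∧ U.Nonempty) ∧ ∀ W : Set X, IsOpen W → p ∈ W → ∃ U ∈ B, U ⊆ W

/-- The weight of `X`: the least infinite cardinal `κ` such that `X` has a base of
cardinality at most `κ`. -/
noncomputable def weight (X : Type u) [TopologicalSpace X] : Cardinal.{u} :=
  sInf {κ | ℵ₀ ≤ κ ∧ ∃ B : Set (Set X), IsBase B ∧ #B ≤ κ}

/-- The character of `p` in `X`. -/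
noncomputable def character [TopologicalSpace X] (p : X) : Cardinal.{u} :=
  sInf {κ | ℵ₀ ≤ κ ∧ ∃ B : Set (Set X), IsLocalBase p B ∧ #B ≤ κ}

/-- The π-character of `p` in `X`. -/
noncomputable def piCharacter [TopologicalSpace X] (p : X) : Cardinal.{u} :=
  sInf {κ | ℵ₀ ≤ κ ∧ ∃ B : Set (Set X), IsLocalPiBase p B ∧ #B ≤ κ}

/-- A family of sets (ordered by `⊆`) is `κ^op`-like if no member is contained in
`κ`-many members. -/
def IsOpLike {Y : Type u} (B : Set (Set Y)) (κ : Cardinal.{u}) : Prop :=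
  ∀ U ∈ B, #{V : Set Y // V ∈ B ∧ U ⊆ V} < κ

/-- The Noetherian type of `X`: the least infinite `κ` such that `X` has a
`κ^op`-like base. -/
noncomputable def Nt (X : Type u) [TopologicalSpace X] : Cardinal.{u} :=
  sInf {κ | ℵ₀ ≤ κ ∧ ∃ B : Set (Set X), IsBase B ∧ IsOpLike B κ}

/-- `⟨F i⟩` is a `⟨#ι, κ⟩`-splitter of `X`: a sequence of finite open covers such
that for every index set `I` of cardinality `κ` and every choice `U i ∈ F i`
(`i ∈ I`), the interior of `⋂_{i ∈ I} U i` is empty. -/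
def IsSplitter [TopologicalSpace X] {ι : Type u} (F : ι → Set (Set X))
    (κ : Cardinal.{u}) : Prop :=
  (∀ i, (F i).Finite ∧ (∀ U ∈ F i, IsOpen U) ∧ ⋃₀ F i = Set.univ) ∧
  ∀ (I : Set ι) (U : ι → Set X), #I = κ → (∀ i ∈ I, U i ∈ F i) →
    interior (⋂ i ∈ I, U i) = ∅

theorem Cardinal.mk_biUnion_lt_of_finite {ι α : Type u} {κ : Cardinal.{u}} (hκ : ℵ₀ ≤ κ)
    {J : Set ι} (hJ : #J < κ) {S : ι → Set α} (hS : ∀ i ∈ J, (S i).Finite) :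
    #(⋃ i ∈ J, S i) < κ := by
  rcases J.finite_or_infinite with hfin | hinf
  · exact (hfin.biUnion hS).lt_aleph0.trans_le hκ
  · have : Infinite J := hinf.to_subtype
    calc #(⋃ i ∈ J, S i) ≤ #J * ℵ₀ :=
          (mk_biUnion_le S J).trans <| mul_le_mul_right
            (ciSup_le' fun i : J => (hS i.1 i.2).lt_aleph0.le) _
      _ = #J := mul_aleph0_eq (aleph0_le_mk J)
      _ < κ := hJ

section

variable [TopologicalSpace X]

theorem IsSplitter.mk_setOf_exists_superset_lt {ι : Type u} {F : ι → Set (Set X)}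
    {κ : Cardinal.{u}} (hsp : IsSplitter F κ) {O : Set X} (hO : IsOpen O) (hne : O.Nonempty) :
    #{i | ∃ U ∈ F i, O ⊆ U} < κ := by
  by_contra! hle
  obtain ⟨I, hIJ, hIκ⟩ := le_mk_iff_exists_subset.mp hle
  have hI : ∀ i ∈ I, ∃ U ∈ F i, O ⊆ U := hIJ
  choose! U hUF hOU using hI
  have hO_int : O ⊆ interior (⋂ i ∈ I, U i) :=
    interior_maximal (subset_iInter₂ hOU) hO
  rw [hsp.2 I U hIκ hUF] at hO_int
  obtain ⟨x, hx⟩ := hne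
  exact hO_int hx

theorem exists_finite_refinement_of_isBase [CompactSpace X] {A : Set (Set X)}
    (hA : IsBase A) {F : Set (Set X)} (hF : ∀ U ∈ F, IsOpen U) (hcov : ⋃₀ F = Set.univ) :
    ∃ R ⊆ A, R.Finite ∧ ⋃₀ R = Set.univ ∧ ∀ W ∈ R, ∃ U ∈ F, W ⊆ U := by
  have hpick : ∀ p : X, ∃ W ∈ A, p ∈ W ∧ ∃ U ∈ F, W ⊆ U := fun p => by
    obtain ⟨U, hUF, hpU⟩ : p ∈ ⋃₀ F := hcov ▸ mem_univ p
    obtain ⟨W, hWA, hpW, hWU⟩ := hA.2 U (hF U hUF) p hpU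
    exact ⟨W, hWA, hpW, U, hUF, hWU⟩
  choose W hWA hpW hWF using hpick
  obtain ⟨t, ht⟩ := isCompact_univ.elim_finite_subcover W (fun p => hA.1 _ (hWA p))
    fun p _ => mem_iUnion.mpr ⟨p, hpW p⟩
  refine ⟨W '' t, image_subset_iff.mpr fun p _ => hWA p, t.finite_toSet.image W,
    univ_subset_iff.mp ?_, forall_mem_image.mpr fun p _ => hWF p⟩
  simpa only [sUnion_image, Finset.mem_coe] using ht

end

section

variable {A : Set (Set X)}

def refineBase (A : Set (Set X)) (R : A → Set (Set X)) : Set (Set X) :=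
  {S | S.Nonempty ∧ ∃ V : A, ∃ W ∈ R V, V.1 ∩ W = S}

variable {R : A → Set (Set X)}

theorem refineBase_subset (hinter : ∀ U ∈ A, ∀ V ∈ A, U ∩ V ∈ A ∨ U ∩ V = ∅)
    (hRA : ∀ V, R V ⊆ A) : refineBase A R ⊆ A := by
  rintro S ⟨hne, V, W, hW, rfl⟩
  exact (hinter V.1 V.2 W (hRA V hW)).resolve_right hne.ne_empty

theorem isBase_refineBase [TopologicalSpace X] (hA : IsBase A) (hRA : ∀ V, R V ⊆ A)
    (hcov : ∀ V, ⋃₀ R V = Set.univ) : IsBase (refineBase A R) := by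
  refine ⟨fun S ⟨_, V, W, hW, hS⟩ => hS ▸ (hA.1 V V.2).inter (hA.1 W (hRA V hW)),
    fun O hO q hq => ?_⟩
  obtain ⟨V, hVA, hqV, hVO⟩ := hA.2 O hO q hq
  obtain ⟨W, hW, hqW⟩ : q ∈ ⋃₀ R ⟨V, hVA⟩ := hcov _ ▸ mem_univ q
  exact ⟨V ∩ W, ⟨⟨q, hqV, hqW⟩, ⟨V, hVA⟩, W, hW, rfl⟩, ⟨hqV, hqW⟩, inter_subset_left.trans hVO⟩

theorem isOpLike_refineBase {κ : Cardinal.{u}} (hκ : ℵ₀ ≤ κ) (hRfin : ∀ V, (R V).Finite)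
    (hsmall : ∀ O ∈ refineBase A R, #{V | ∃ W ∈ R V, O ⊆ W} < κ) :
    IsOpLike (refineBase A R) κ := by
  intro O hO
  have hsub : {S | S ∈ refineBase A R ∧ O ⊆ S} ⊆
      ⋃ V ∈ {V | ∃ W ∈ R V, O ⊆ W}, (V.1 ∩ ·) '' R V := by
    rintro S ⟨⟨-, V, W, hW, rfl⟩, hOS⟩
    exact mem_biUnion ⟨W, hW, hOS.trans inter_subset_right⟩ ⟨W, hW, rfl⟩
  exact (mk_le_mk_of_subset hsub).trans_lt <|
    mk_biUnion_lt_of_finite hκ (hsmall O hO) fun V _ => (hRfin V).image _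

end

theorem opLike_base_of_splitter_general
    [TopologicalSpace X] [CompactSpace X]
    (A : Set (Set X)) (hbase : IsBase A) (hsize : #A ≤ weight X)
    (hinter : ∀ U ∈ A, ∀ V ∈ A, U ∩ V ∈ A ∨ U ∩ V = ∅)
    (κ : Cardinal.{u}) (hκω : ℵ₀ ≤ κ)
    (ι : Type u) (F : ι → Set (Set X)) (hι : #ι = weight X)
    (hsp : IsSplitter F κ) :
    ∃ B ⊆ A, IsBase B ∧ IsOpLike B κ := by
  obtain ⟨f⟩ : Nonempty (A ↪ ι) := le_def _ _ |>.mp (hsize.trans hι.ge)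
  choose R hRA hRfin hRcov hRF using fun V : A =>
    exists_finite_refinement_of_isBase hbase (hsp.1 (f V)).2.1 (hsp.1 (f V)).2.2
  have hBA := refineBase_subset hinter hRA
  have hB := isBase_refineBase hbase hRA hRcov
  refine ⟨refineBase A R, hBA, hB, isOpLike_refineBase hκω hRfin fun O hO => ?_⟩
  have hsub : {V | ∃ W ∈ R V, O ⊆ W} ⊆ f ⁻¹' {i | ∃ U ∈ F i, O ⊆ U} := by
    rintro V ⟨W, hW, hOW⟩
    obtain ⟨U, hU, hWU⟩ := hRF V W hW
    exact ⟨U, hU, hOW.trans hWU⟩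
  calc #{V | ∃ W ∈ R V, O ⊆ W} ≤ #(f ⁻¹' {i | ∃ U ∈ F i, O ⊆ U}) := mk_le_mk_of_subset hsub
    _ ≤ #{i | ∃ U ∈ F i, O ⊆ U} := mk_preimage_of_injective _ _ f.injective
    _ < κ := hsp.mk_setOf_exists_superset_lt (hB.1 O hO) hO.1

/-- Lemma: if a compact space `X` has a base `A` of size at most `w(X)` closed under
pairwise intersections (in `A ∪ {∅}`), `κ ≤ w(X)`, and `X` has a
`⟨w(X), κ⟩`-splitter, then `A` contains a `κ^op`-like base of `X`. -/
theorem opLike_base_of_splitter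
    [TopologicalSpace X] [CompactSpace X]
    (A : Set (Set X)) (hbase : IsBase A) (hsize : #A ≤ weight X)
    (hinter : ∀ U ∈ A, ∀ V ∈ A, U ∩ V ∈ A ∨ U ∩ V = ∅)
    (κ : Cardinal.{u}) (hκω : ℵ₀ ≤ κ) (hκ : κ ≤ weight X)
    (ι : Type u) (F : ι → Set (Set X)) (hι : #ι = weight X)
    (hsp : IsSplitter F κ) :
    ∃ B ⊆ A, IsBase B ∧ IsOpLike B κ :=
  opLike_base_of_splitter_general A hbase hsize hinter κ hκω ι F hι hsp
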